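/- Let k ≥ 3, m ≥ 0 and n ≥ k−1 be integers. Then #{Δ ∈ P_k(m,n) : d_1 = d_{k−1} ≥ 2 and α_1 = α_2 = β_1 = d_1} = #{Δ ∈ P_k(m,n+1) : d_1 ≥ 3, d_i = d_1 − 1 for all 2 ≤ i ≤ k−1, γ^1 = ⋯ = γ^{k−2} = ∅, and α_1 = d_1 − 1}. -/

import Mathlib

/-- A partition: a finite nonincreasing list of positive integers. -/
structure Partn where
  parts : List ℕ
  sorted : parts.Pairwise (· ≥ ·)
  pos : ∀ x ∈ parts, 0 < x

namespace Partn

/-- The weight `|λ|` of a partition: the sum of its parts. -/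
def wt (p : Partn) : ℕ := p.parts.sum

/-- The length `ℓ(λ)`: the number of parts. -/
def len (p : Partn) : ℕ := p.parts.length

/-- The `j`-th largest part `λ_j` (1-indexed), with `λ_j = 0` for `j > ℓ(λ)`. -/
def part (p : Partn) (j : ℕ) : ℕ := p.parts.getD (j - 1) 0

/-- `f_j(λ)`: the number of parts of `λ` equal to `j`. -/
def freq (p : Partn) (j : ℕ) : ℕ := p.parts.count j

/-- The empty partition. -/
def empty : Partn := ⟨[], List.Pairwise.nil, by simp⟩

end Partn

/-- The type of `(2k-1)`-tuples `(α, β, γ^1, …, γ^{k-2}, ϖ^1, …, ϖ^{k-1})`. -/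
abbrev PTuple (k : ℕ) : Type :=
  Partn × Partn × (Fin (k - 2) → Partn) × (Fin (k - 1) → Partn)

/-- `d_j := ℓ(ϖ^j)` (1-indexed, `0` out of range). -/
def dIdx (k : ℕ) (w : Fin (k - 1) → Partn) (j : ℕ) : ℕ :=
  if h : j - 1 < k - 1 then (w ⟨j - 1, h⟩).len else 0

/-- `γ^j` (1-indexed, the empty partition out of range). -/
def gIdx (k : ℕ) (g : Fin (k - 2) → Partn) (j : ℕ) : Partn :=
  if h : j - 1 < k - 2 then g ⟨j - 1, h⟩ else Partn.empty

/-- Membership in Garvan-type set `P_k(m, n)` of `(2k-1)`-tuples of partitions. -/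
def PkMem (k : ℕ) (m : ℤ) (n : ℕ) (t : PTuple k) : Prop :=
  (∀ i : Fin (k - 1), (t.2.2.2 i).parts =
      List.replicate (t.2.2.2 i).len (t.2.2.2 i).len) ∧
  (∀ j, 1 ≤ j → j + 1 ≤ k - 1 → dIdx k t.2.2.2 (j + 1) ≤ dIdx k t.2.2.2 j) ∧
  1 ≤ dIdx k t.2.2.2 (k - 1) ∧
  (∀ x ∈ t.1.parts, x ≤ dIdx k t.2.2.2 (k - 1)) ∧
  (∀ x ∈ t.2.1.parts, x ≤ dIdx k t.2.2.2 (k - 1)) ∧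
  (t.1.len : ℤ) - (t.2.1.len : ℤ) = m ∧
  (∀ j, 1 ≤ j → j ≤ k - 2 →
      (gIdx k t.2.2.1 j).len ≤ dIdx k t.2.2.2 j - dIdx k t.2.2.2 (j + 1)) ∧
  t.1.wt + t.2.1.wt + (∑ i, (t.2.2.1 i).wt) + (∑ i, (t.2.2.2 i).wt) = n

/-!
Let `d = d_1`. On the left every `d_i` equals `d`, so every `γ^i` is empty, and `α` and `β`
both start with a part `d`. Deleting these two parts (weight `2d`) and enlarging `ϖ^1` from
`d^d` to `(d+1)^(d+1)` (weight `2d + 1`) raises the weight by one and keeps `ℓ(α) − ℓ(β)`;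
the new `α_1` is the old `α_2 = d = d_1 − 1`. Since `d` can be read off the new `d_1`, the
construction is reversed by putting the parts `d` back and shrinking `ϖ^1` again.
-/

namespace Partn

theorem ext {p q : Partn} (h : p.parts = q.parts) : p = q := by
  cases p; cases q; simpa using h

def tail (p : Partn) : Partn :=
  ⟨p.parts.tail, p.sorted.tail, fun x hx => p.pos x (List.mem_of_mem_tail hx)⟩

def cons (a : ℕ) (p : Partn) (ha : 0 < a) (hp : ∀ x ∈ p.parts, x ≤ a) : Partn :=
  ⟨a :: p.parts, List.pairwise_cons.2 ⟨hp, p.sorted⟩, by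
    simpa only [List.mem_cons, forall_eq_or_imp] using ⟨ha, p.pos⟩⟩

def square (d : ℕ) : Partn :=
  ⟨List.replicate d d, List.pairwise_replicate.2 (Or.inr le_rfl), fun _ hx => by
    obtain ⟨hd, rfl⟩ := List.mem_replicate.1 hx; omega⟩

@[simp] lemma len_empty : empty.len = 0 := rfl

@[simp] lemma wt_empty : empty.wt = 0 := rfl

@[simp] lemma parts_square (d : ℕ) : (square d).parts = List.replicate d d := rfl

@[simp] lemma len_square (d : ℕ) : (square d).len = d := List.length_replicate

@[simp] lemma wt_square (d : ℕ) : (square d).wt = d * d := by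
  simp [wt, square, List.sum_replicate]

lemma eq_square_of_parts_eq_replicate {p : Partn} (h : p.parts = List.replicate p.len p.len) :
    p = square p.len :=
  ext h

lemma eq_empty_of_len_eq_zero {p : Partn} (h : p.len = 0) : p = empty :=
  ext (List.length_eq_zero_iff.1 h)

lemma parts_eq_cons_tail {p : Partn} {a : ℕ} (ha : 0 < a) (h : p.part 1 = a) :
    p.parts = a :: p.tail.parts := by
  rcases hp : p.parts with _ | ⟨b, l⟩
  · simp [part, hp] at h; omega
  · simp_all [part, tail]

lemma wt_eq_add_wt_tail {p : Partn} {a : ℕ} (ha : 0 < a) (h : p.part 1 = a) :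
    p.wt = a + p.tail.wt := by
  rw [wt, parts_eq_cons_tail ha h, List.sum_cons, wt]

lemma len_eq_len_tail_add_one {p : Partn} {a : ℕ} (ha : 0 < a) (h : p.part 1 = a) :
    p.len = p.tail.len + 1 := by
  rw [len, parts_eq_cons_tail ha h, List.length_cons, len]

lemma part_one_tail (p : Partn) : p.tail.part 1 = p.part 2 := by
  rcases hp : p.parts with _ | ⟨b, l⟩ <;> simp [part, tail, hp]

variable {a : ℕ} {p : Partn} {ha : 0 < a} {hp : ∀ x ∈ p.parts, x ≤ a}

lemma le_of_mem_cons : ∀ x ∈ (cons a p ha hp).parts, x ≤ a :=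
  fun x hx => (List.mem_cons.1 hx).elim Eq.le (hp x)

@[simp] lemma tail_cons : (cons a p ha hp).tail = p := rfl

@[simp] lemma len_cons : (cons a p ha hp).len = p.len + 1 := rfl

@[simp] lemma wt_cons : (cons a p ha hp).wt = a + p.wt := List.sum_cons

@[simp] lemma part_one_cons : (cons a p ha hp).part 1 = a := rfl

@[simp] lemma part_two_cons : (cons a p ha hp).part 2 = p.part 1 := by
  simp [cons, part]

end Partn

open Partn

def flatSquares (N d : ℕ) : Fin N → Partn := fun _ => square d

def stepSquares (N d : ℕ) : Fin N → Partn :=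
  fun i => if (i : ℕ) = 0 then square (d + 1) else square d

lemma sum_wt_flatSquares (N d : ℕ) : ∑ i, (flatSquares N d i).wt = N * (d * d) := by
  simp [flatSquares]

lemma sum_wt_stepSquares {N : ℕ} (hN : 0 < N) (d : ℕ) :
    ∑ i, (stepSquares N d i).wt = N * (d * d) + 2 * d + 1 := by
  obtain ⟨N, rfl⟩ := Nat.exists_eq_add_of_lt hN
  simp [Fin.sum_univ_succ, stepSquares]
  ring

section Index

variable {k : ℕ}

lemma dIdx_eq_len {w : Fin (k - 1) → Partn} {j : ℕ} (hj : 1 ≤ j) (hjk : j ≤ k - 1) :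
    dIdx k w j = (w ⟨j - 1, by omega⟩).len :=
  dif_pos _

lemma dIdx_succ (w : Fin (k - 1) → Partn) (i : Fin (k - 1)) : dIdx k w (i + 1) = (w i).len :=
  dIdx_eq_len (by omega) (by omega)

lemma gIdx_succ (g : Fin (k - 2) → Partn) (i : Fin (k - 2)) : gIdx k g (i + 1) = g i :=
  dif_pos _

lemma dIdx_flatSquares {d j : ℕ} (hj : 1 ≤ j) (hjk : j ≤ k - 1) :
    dIdx k (flatSquares (k - 1) d) j = d := by
  simp [dIdx_eq_len hj hjk, flatSquares]

lemma dIdx_stepSquares {d j : ℕ} (hj : 1 ≤ j) (hjk : j ≤ k - 1) :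
    dIdx k (stepSquares (k - 1) d) j = if j = 1 then d + 1 else d := by
  rw [dIdx_eq_len hj hjk]
  by_cases h : j = 1
  · simp [stepSquares, h]
  · simp [stepSquares, h, show j - 1 ≠ 0 by omega]

lemma dIdx_antitone {w : Fin (k - 1) → Partn}
    (hw : ∀ j, 1 ≤ j → j + 1 ≤ k - 1 → dIdx k w (j + 1) ≤ dIdx k w j)
    {i j : ℕ} (hi : 1 ≤ i) (hij : i ≤ j) (hj : j ≤ k - 1) : dIdx k w j ≤ dIdx k w i := by
  induction j, hij using Nat.le_induction with
  | base => rfl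
  | succ j hij ih => exact (hw j (by omega) hj).trans (ih (by omega))

lemma eq_of_eq_square_dIdx {w : Fin (k - 1) → Partn}
    (hw : ∀ i, (w i).parts = List.replicate (w i).len (w i).len)
    {v : Fin (k - 1) → Partn} (hv : ∀ i, v i = square (dIdx k w (i + 1))) : w = v := by
  funext i
  rw [hv, dIdx_succ]
  exact eq_square_of_parts_eq_replicate (hw i)

end Index

section Tuples

variable {k : ℕ} {m : ℤ} {n : ℕ}

lemma gIdx_eq_empty {γ : Fin (k - 2) → Partn} (hγ : ∀ i, γ i = empty) (j : ℕ) :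
    gIdx k γ j = empty := by
  unfold gIdx
  split <;> simp [hγ]

lemma pkMem_flatSquares (hk : 2 ≤ k) {α β : Partn} {γ : Fin (k - 2) → Partn} {d : ℕ}
    (hd : 1 ≤ d) (hα : ∀ x ∈ α.parts, x ≤ d) (hβ : ∀ x ∈ β.parts, x ≤ d)
    (hlen : (α.len : ℤ) - β.len = m) (hγ : ∀ i, γ i = empty)
    (hwt : α.wt + β.wt + (k - 1) * (d * d) = n) :
    PkMem k m n (α, β, γ, flatSquares (k - 1) d) := by
  have hdk : dIdx k (flatSquares (k - 1) d) (k - 1) = d := dIdx_flatSquares (by omega) le_rfl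
  refine ⟨fun _ => by simp [flatSquares], fun j hj hjk => ?_, by simpa [hdk] using hd,
    by simpa [hdk] using hα, by simpa [hdk] using hβ, hlen,
    fun j _ _ => by simp [gIdx_eq_empty hγ], ?_⟩
  · rw [dIdx_flatSquares (by omega) hjk, dIdx_flatSquares hj (by omega)]
  · simpa [hγ, sum_wt_flatSquares] using hwt

lemma pkMem_stepSquares (hk : 3 ≤ k) {α β : Partn} {γ : Fin (k - 2) → Partn} {d : ℕ}
    (hd : 1 ≤ d) (hα : ∀ x ∈ α.parts, x ≤ d) (hβ : ∀ x ∈ β.parts, x ≤ d)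
    (hlen : (α.len : ℤ) - β.len = m) (hγ : ∀ i, γ i = empty)
    (hwt : α.wt + β.wt + ((k - 1) * (d * d) + 2 * d + 1) = n) :
    PkMem k m n (α, β, γ, stepSquares (k - 1) d) := by
  have hdk : dIdx k (stepSquares (k - 1) d) (k - 1) = d := by
    rw [dIdx_stepSquares (by omega) le_rfl, if_neg (by omega)]
  refine ⟨fun i => by simp only [stepSquares]; split <;> simp, fun j hj hjk => ?_,
    by simpa [hdk] using hd, by simpa [hdk] using hα, by simpa [hdk] using hβ, hlen,
    fun j _ _ => by simp [gIdx_eq_empty hγ], ?_⟩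
  · rw [dIdx_stepSquares (by omega) hjk, dIdx_stepSquares hj (by omega)]
    split_ifs <;> omega
  · simpa [hγ, sum_wt_stepSquares (show 0 < k - 1 by omega)] using hwt

end Tuples

def pkFlat (k : ℕ) (m : ℤ) (n : ℕ) : Set (PTuple k) :=
  {t : PTuple k | PkMem k m n t ∧
    dIdx k t.2.2.2 1 = dIdx k t.2.2.2 (k - 1) ∧ 2 ≤ dIdx k t.2.2.2 1 ∧
    t.1.part 1 = dIdx k t.2.2.2 1 ∧ t.1.part 2 = dIdx k t.2.2.2 1 ∧
    t.2.1.part 1 = dIdx k t.2.2.2 1}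

def pkStep (k : ℕ) (m : ℤ) (n : ℕ) : Set (PTuple k) :=
  {t : PTuple k | PkMem k m n t ∧ 3 ≤ dIdx k t.2.2.2 1 ∧
    (∀ j, 2 ≤ j → j ≤ k - 1 → dIdx k t.2.2.2 j = dIdx k t.2.2.2 1 - 1) ∧
    (∀ j, 1 ≤ j → j ≤ k - 2 → (gIdx k t.2.2.1 j).parts = []) ∧
    t.1.part 1 = dIdx k t.2.2.2 1 - 1}

def growFirstSquare (k : ℕ) (t : PTuple k) : PTuple k :=
  (t.1.tail, t.2.1.tail, t.2.2.1, stepSquares (k - 1) (dIdx k t.2.2.2 1))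

section Bijection

variable {k : ℕ} {m : ℤ} {n : ℕ}

lemma pkFlat_shape {t : PTuple k} (ht : t ∈ pkFlat k m n) :
    t.2.2.2 = flatSquares (k - 1) (dIdx k t.2.2.2 1) ∧ ∀ i, t.2.2.1 i = empty := by
  obtain ⟨⟨hsq, hchain, -, -, -, -, hγ, -⟩, hd1k, -⟩ := ht
  have hconst : ∀ j, 1 ≤ j → j ≤ k - 1 → dIdx k t.2.2.2 j = dIdx k t.2.2.2 1 := fun j hj hjk =>
    le_antisymm (dIdx_antitone hchain le_rfl hj hjk)
      (hd1k ▸ dIdx_antitone hchain hj hjk le_rfl)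
  refine ⟨eq_of_eq_square_dIdx hsq fun i => ?_, fun i => eq_empty_of_len_eq_zero ?_⟩
  · rw [flatSquares, hconst (i + 1) (by omega) (by omega)]
  · have := hγ (i + 1) (by omega) (by omega)
    rw [gIdx_succ, hconst (i + 1) (by omega) (by omega),
      hconst (i + 1 + 1) (by omega) (by omega)] at this
    omega

lemma pkStep_shape {t : PTuple k} (ht : t ∈ pkStep k m n) :
    t.2.2.2 = stepSquares (k - 1) (dIdx k t.2.2.2 1 - 1) ∧ ∀ i, t.2.2.1 i = empty := by
  obtain ⟨⟨hsq, -⟩, hd3, hdall, hγ, -⟩ := ht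
  refine ⟨eq_of_eq_square_dIdx hsq fun i => ?_, fun i => ext ?_⟩
  · by_cases hi : (i : ℕ) = 0
    · simp only [stepSquares, hi, if_true, zero_add]
      congr 1; omega
    · simp only [stepSquares, hi, if_false]
      rw [hdall (i + 1) (by omega) (by omega)]
  · simpa [gIdx_succ, empty] using hγ (i + 1) (by omega) (by omega)

lemma mapsTo_growFirstSquare (hk : 3 ≤ k) :
    Set.MapsTo (growFirstSquare k) (pkFlat k m n) (pkStep k m (n + 1)) := by
  intro t ht
  obtain ⟨hw, hγ⟩ := pkFlat_shape ht
  obtain ⟨⟨-, -, -, hαb, hβb, hlen, -, hwt⟩, hd1k, hd2, hα1, hα2, hβ1⟩ := ht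
  set d := dIdx k t.2.2.2 1
  have hd : ∀ j, 1 ≤ j → j ≤ k - 1 →
      dIdx k (growFirstSquare k t).2.2.2 j = if j = 1 then d + 1 else d :=
    fun j => dIdx_stepSquares
  have hα := len_eq_len_tail_add_one (by omega) hα1
  have hβ := len_eq_len_tail_add_one (by omega) hβ1
  refine ⟨pkMem_stepSquares hk (by omega) (fun x hx => ?_) (fun x hx => ?_)
    (by simp only [hα, hβ] at hlen; omega) hγ ?_, ?_, fun j hj hjk => ?_, fun j _ _ => ?_, ?_⟩
  · exact (hαb x (List.mem_of_mem_tail hx)).trans hd1k.ge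
  · exact (hβb x (List.mem_of_mem_tail hx)).trans hd1k.ge
  · rw [hw, sum_wt_flatSquares, wt_eq_add_wt_tail (by omega) hα1,
      wt_eq_add_wt_tail (by omega) hβ1] at hwt
    simp only [hγ, wt_empty, Finset.sum_const_zero] at hwt
    linarith
  · rw [hd 1 le_rfl (by omega), if_pos rfl]; omega
  · rw [hd j (by omega) hjk, hd 1 le_rfl (by omega), if_neg (by omega), if_pos rfl]; rfl
  · simp [growFirstSquare, gIdx_eq_empty hγ, empty]
  · rw [hd 1 le_rfl (by omega), if_pos rfl]
    exact (part_one_tail _).trans hα2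

lemma injOn_growFirstSquare (hk : 2 ≤ k) : Set.InjOn (growFirstSquare k) (pkFlat k m n) := by
  intro t ht u hu h
  obtain ⟨hwt, -⟩ := pkFlat_shape ht
  obtain ⟨hwu, -⟩ := pkFlat_shape hu
  obtain ⟨-, -, hdt, hαt, -, hβt⟩ := ht
  obtain ⟨-, -, hdu, hαu, -, hβu⟩ := hu
  have hd : dIdx k t.2.2.2 1 = dIdx k u.2.2.2 1 := by
    have := congrArg (fun s : PTuple k => dIdx k s.2.2.2 1) h
    simpa [growFirstSquare, dIdx_stepSquares le_rfl (by omega : 1 ≤ k - 1)] using this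
  have hα : t.1.tail = u.1.tail := congrArg (·.1) h
  have hβ : t.2.1.tail = u.2.1.tail := congrArg (·.2.1) h
  refine Prod.ext (ext ?_) (Prod.ext (ext ?_) (Prod.ext (congrArg (·.2.2.1) h) ?_))
  · rw [parts_eq_cons_tail (by omega) hαt, parts_eq_cons_tail (by omega) hαu, hα, hd]
  · rw [parts_eq_cons_tail (by omega) hβt, parts_eq_cons_tail (by omega) hβu, hβ, hd]
  · rw [hwt, hwu, hd]

lemma surjOn_growFirstSquare (hk : 3 ≤ k) :
    Set.SurjOn (growFirstSquare k) (pkFlat k m n) (pkStep k m (n + 1)) := by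
  intro t ht
  obtain ⟨hw, hγ⟩ := pkStep_shape ht
  obtain ⟨⟨-, -, -, hαb, hβb, hlen, -, hwt⟩, hd3, hdall, -, hα1⟩ := ht
  set d := dIdx k t.2.2.2 1 - 1 with hd_def
  have hdk : dIdx k t.2.2.2 (k - 1) = d := hdall _ (by omega) le_rfl
  rw [hdk] at hαb hβb
  have hd : ∀ {j}, 1 ≤ j → j ≤ k - 1 → dIdx k (flatSquares (k - 1) d) j = d :=
    dIdx_flatSquares
  refine ⟨(cons d t.1 (by omega) hαb, cons d t.2.1 (by omega) hβb, t.2.2.1,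
    flatSquares (k - 1) d), ⟨pkMem_flatSquares (by omega) (by omega) le_of_mem_cons
    le_of_mem_cons (by simp only [len_cons]; omega) hγ ?_, ?_⟩, ?_⟩
  · rw [hw, sum_wt_stepSquares (by omega)] at hwt
    simp only [hγ, wt_empty, Finset.sum_const_zero] at hwt
    simp only [wt_cons]
    linarith
  · simp only [hd le_rfl (by omega), hd (by omega : 1 ≤ k - 1) le_rfl, part_one_cons,
      part_two_cons, hα1, and_true, true_and]
    omega
  · simp only [growFirstSquare, tail_cons, hd le_rfl (by omega), ← hw]

end Bijection

theorem lem_pp11_general (k : ℕ) (m : ℤ) (n : ℕ) (hk : 3 ≤ k) :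
    {t : PTuple k | PkMem k m n t ∧
        dIdx k t.2.2.2 1 = dIdx k t.2.2.2 (k - 1) ∧ 2 ≤ dIdx k t.2.2.2 1 ∧
        t.1.part 1 = dIdx k t.2.2.2 1 ∧ t.1.part 2 = dIdx k t.2.2.2 1 ∧
        t.2.1.part 1 = dIdx k t.2.2.2 1}.ncard =
      {t : PTuple k | PkMem k m (n + 1) t ∧ 3 ≤ dIdx k t.2.2.2 1 ∧
        (∀ j, 2 ≤ j → j ≤ k - 1 → dIdx k t.2.2.2 j = dIdx k t.2.2.2 1 - 1) ∧
        (∀ j, 1 ≤ j → j ≤ k - 2 → (gIdx k t.2.2.1 j).parts = []) ∧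
        t.1.part 1 = dIdx k t.2.2.2 1 - 1}.ncard :=
  Set.BijOn.ncard_eq (s := pkFlat k m n) (t := pkStep k m (n + 1))
    ⟨mapsTo_growFirstSquare hk, injOn_growFirstSquare (by omega), surjOn_growFirstSquare hk⟩

/-- Lemma 5.13 (restated). -/
theorem lem_pp11 (k : ℕ) (m : ℤ) (n : ℕ) (hk : 3 ≤ k) (hm : 0 ≤ m)
    (hn : k - 1 ≤ n) :
    {t : PTuple k | PkMem k m n t ∧
        dIdx k t.2.2.2 1 = dIdx k t.2.2.2 (k - 1) ∧ 2 ≤ dIdx k t.2.2.2 1 ∧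
        t.1.part 1 = dIdx k t.2.2.2 1 ∧ t.1.part 2 = dIdx k t.2.2.2 1 ∧
        t.2.1.part 1 = dIdx k t.2.2.2 1}.ncard =
      {t : PTuple k | PkMem k m (n + 1) t ∧ 3 ≤ dIdx k t.2.2.2 1 ∧
        (∀ j, 2 ≤ j → j ≤ k - 1 → dIdx k t.2.2.2 j = dIdx k t.2.2.2 1 - 1) ∧
        (∀ j, 1 ≤ j → j ≤ k - 2 → (gIdx k t.2.2.1 j).parts = []) ∧
        t.1.part 1 = dIdx k t.2.2.2 1 - 1}.ncard :=
  lem_pp11_general k m n hk
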